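/- arXiv:0711.0897 — 2 statements merged into one kernel-verified Lean document; each statement's English description precedes it below -/
import Mathlib

section
/- For every partition Π of n and every integer b with 0 ≤ b ≤ n, either Π does not represent b, or there exist multisets Π', Π'' with Π = Π' ∪ Π'', S(Π') = b, S(Π'') = n − b, and for any a not represented by Π, the integer a − b is not represented by Π''. -/
def IsPartition (n : ℕ) (P : Multiset ℕ) : Prop :=
  (∀ x ∈ P, 0 < x) ∧ P.sum = n

def Represents (P : Multiset ℕ) (a : ℕ) : Prop :=
  ∃ s ≤ P, s.sum = a

def RepresentsZ (P : Multiset ℕ) (a : ℤ) : Prop :=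
  ∃ s ≤ P, (s.sum : ℤ) = a

theorem stmt_9 (n : ℕ) (P : Multiset ℕ) (hP : IsPartition n P)
    (b : ℕ) (hb : b ≤ n) :
    ¬ Represents P b ∨
      ∃ P' P'' : Multiset ℕ, P = P' + P'' ∧ P'.sum = b ∧ P''.sum = n - b ∧
        ∀ a : ℤ, ¬ RepresentsZ P a → ¬ RepresentsZ P'' (a - b) := by
  by_cases hrep : Represents P b
  · right
    obtain ⟨s, hs, hsum⟩ := hrep
    refine ⟨s, P - s, ?_, hsum, ?_, ?_⟩
    · rw [add_comm, tsub_add_cancel_of_le hs]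
    · have := hP.2
      have h1 : (P - s).sum + s.sum = P.sum := by
        rw [← Multiset.sum_add, tsub_add_cancel_of_le hs]
      omega
    · intro a ha ⟨t, ht, htsum⟩
      apply ha
      refine ⟨s + t, ?_, ?_⟩
      · calc s + t ≤ s + (P - s) := by
              exact add_le_add_right ht s
          _ = P := by rw [add_comm]; exact tsub_add_cancel_of_le hs
      · rw [Multiset.sum_add, Nat.cast_add]
        omega
  · left; exact hrep
end

section
/- The map Π ↦ Π from 2-reduced partitions of n to represented sets satisfies: the number of distinct sets E(Π) over all partitions of n equals the number of distinct sets E(Π) over all 2-reduced partitions of n, i.e. ĥp(n) = ĥq(n,2). -/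
def reprSet (P : Multiset ℕ) : Set ℕ := {a | Represents P a}

lemma reprSet_cons (b : ℕ) (Q : Multiset ℕ) :
    reprSet (b ::ₘ Q) = reprSet Q ∪ (fun c => b + c) '' reprSet Q := by
  ext a
  constructor
  · rintro ⟨s, hs, rfl⟩
    by_cases hb : b ∈ s
    · right
      refine ⟨(s.erase b).sum, ⟨s.erase b, ?_, rfl⟩, ?_⟩
      · have := Multiset.erase_le_erase b hs
        simpa using this
      · show b + (s.erase b).sum = s.sum
        rw [← Multiset.sum_cons, Multiset.cons_erase hb]
    · left
      refine ⟨s, ?_, rfl⟩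
      rw [Multiset.le_iff_count] at hs ⊢
      intro y
      rcases eq_or_ne y b with rfl | h
      · simp [Multiset.count_eq_zero_of_notMem hb]
      · have := hs y
        simpa [Multiset.count_cons, h] using this
  · rintro (⟨s, hs, rfl⟩ | ⟨c, ⟨s, hs, rfl⟩, rfl⟩)
    · exact ⟨s, le_trans hs (Multiset.le_cons_self _ _), rfl⟩
    · exact ⟨b ::ₘ s, Multiset.cons_le_cons b hs, by simp⟩

lemma key (x : ℕ) (R : Multiset ℕ) :
    reprSet (x ::ₘ x ::ₘ x ::ₘ R) = reprSet (2 * x ::ₘ x ::ₘ R) := by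
  ext a
  simp only [reprSet_cons, Set.image_union, Set.image_image, Set.mem_union, Set.mem_image]
  constructor
  · rintro (((h|⟨c,hc,h⟩)|(⟨c,hc,h⟩|⟨c,hc,h⟩))|((⟨c,hc,h⟩|⟨c,hc,h⟩)|(⟨c,hc,h⟩|⟨c,hc,h⟩)))
    exacts [Or.inl (Or.inl h), Or.inl (Or.inr ⟨c,hc,h⟩), Or.inl (Or.inr ⟨c,hc,h⟩),
      Or.inr (Or.inl ⟨c,hc,by omega⟩), Or.inl (Or.inr ⟨c,hc,h⟩),
      Or.inr (Or.inl ⟨c,hc,by omega⟩), Or.inr (Or.inl ⟨c,hc,by omega⟩),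
      Or.inr (Or.inr ⟨c,hc,by omega⟩)]
  · rintro ((h|⟨c,hc,h⟩)|(⟨c,hc,h⟩|⟨c,hc,h⟩))
    exacts [Or.inl (Or.inl (Or.inl h)), Or.inl (Or.inl (Or.inr ⟨c,hc,h⟩)),
      Or.inl (Or.inr (Or.inr ⟨c,hc,by omega⟩)), Or.inr (Or.inr (Or.inr ⟨c,hc,by omega⟩))]

lemma exists_reduced : ∀ (N : ℕ) (P : Multiset ℕ), Multiset.card P ≤ N →
    (∀ x ∈ P, 0 < x) →
    ∃ Q : Multiset ℕ, (∀ x, Q.count x ≤ 2) ∧ Q.sum = P.sum ∧ (∀ x ∈ Q, 0 < x) ∧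
      reprSet Q = reprSet P := by
  intro N
  induction N with
  | zero =>
    intro P hcard hpos
    exact ⟨P, by simp_all [Multiset.card_eq_zero.mp (Nat.le_zero.mp hcard)], rfl, hpos, rfl⟩
  | succ N ih =>
    intro P hcard hpos
    by_cases h : ∀ x, P.count x ≤ 2
    · exact ⟨P, h, rfl, hpos, rfl⟩
    · push_neg at h
      obtain ⟨x, hx⟩ := h
      have hle : Multiset.replicate 3 x ≤ P := by
        rw [Multiset.le_iff_count]
        intro y
        rcases eq_or_ne y x with rfl | hy
        · simp; omega
        · simp [Multiset.count_replicate, hy]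
      obtain ⟨R, hR⟩ := Multiset.le_iff_exists_add.mp hle
      have hP : P = x ::ₘ x ::ₘ x ::ₘ R := by
        rw [hR, show (3:ℕ) = 2 + 1 from rfl, Multiset.replicate_succ,
          show (2:ℕ) = 1 + 1 from rfl, Multiset.replicate_succ, Multiset.replicate_one]
        simp [Multiset.cons_add]
      have hxpos : 0 < x := hpos x (by rw [hP]; simp)
      have hRpos : ∀ y ∈ R, 0 < y := fun y hy => hpos y (by rw [hP]; simp [hy])
      have hcard' : Multiset.card (2 * x ::ₘ x ::ₘ R) ≤ N := by
        rw [hP] at hcard; simp at hcard ⊢; omega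
      have hpos' : ∀ y ∈ (2 * x ::ₘ x ::ₘ R), 0 < y := by
        intro y hy
        simp only [Multiset.mem_cons] at hy
        rcases hy with rfl | rfl | hy
        · omega
        · exact hxpos
        · exact hRpos y hy
      obtain ⟨Q, hQ1, hQ2, hQ3, hQ4⟩ := ih (2 * x ::ₘ x ::ₘ R) hcard' hpos'
      refine ⟨Q, hQ1, ?_, hQ3, ?_⟩
      · rw [hQ2, hP]; simp; ring
      · rw [hQ4, hP, key]

theorem stmt_11 (n : ℕ) :
    Nat.card {S : Set ℕ // ∃ P : Multiset ℕ, IsPartition n P ∧ reprSet P = S} =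
      Nat.card {S : Set ℕ // ∃ P : Multiset ℕ, IsPartition n P ∧
        (∀ x : ℕ, P.count x ≤ 2) ∧ reprSet P = S} := by
  apply Nat.card_congr
  apply Equiv.subtypeEquivRight
  intro S
  constructor
  · rintro ⟨P, ⟨hpos, hsum⟩, rfl⟩
    obtain ⟨Q, hc, hs, hq, hr⟩ := exists_reduced (Multiset.card P) P le_rfl hpos
    exact ⟨Q, ⟨hq, hs.trans hsum⟩, hc, hr⟩
  · rintro ⟨P, hP, _, hr⟩
    exact ⟨P, hP, hr⟩
end
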